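/- arXiv:2411.02167 — 3 statements merged into one kernel-verified Lean document; each statement's English description precedes it below -/
import Mathlib

section
/- Fix α ∈ (0,1] and λ > 0, and let K ⊆ ℝ^N be a closed convex set with 0 ∈ K. Define γ_{α,λ}(ξ) := (α/(α+1)) (1 + d_K²(ξ) ∧ λ²)^{(α+1)/(2α)} + (1/2)(1+λ²)^{1/(2α) - 1/2} (d_K²(ξ) - λ²)_+. Then γ_{α,λ} is convex on ℝ^N. -/
open Set Metric

/-!
The distance to a convex set is convex, hence so is its square `d_K²`, and
`γ_{α,λ} = Φ ∘ d_K²` for a profile `Φ` that is convex and nondecreasing on `[0, ∞)`.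
Indeed `Φ` is `s ↦ α/(α+1) (1 + s)^{(α+1)/(2α)}` on `[0, λ²]`, continued past `λ²` by its
tangent line there, so `Φ` is differentiable with derivative `½ (1 + s ∧ λ²)^{1/(2α) - 1/2}`,
which is nonnegative and nondecreasing because `α ≤ 1`.
-/

theorem ConvexOn.comp_of_mapsTo {𝕜 E : Type*} [Field 𝕜] [LinearOrder 𝕜] [IsStrictOrderedRing 𝕜]
    [AddCommGroup E] [Module 𝕜 E] {s : Set E} {t : Set 𝕜} {f : E → 𝕜} {g : 𝕜 → 𝕜}
    (hg : ConvexOn 𝕜 t g) (hf : ConvexOn 𝕜 s f) (hg' : MonotoneOn g t) (hst : MapsTo f s t) :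
    ConvexOn 𝕜 s (g ∘ f) :=
  ⟨hf.1, fun _ hx _ hy _ _ ha hb hab =>
    (hg' (hst (hf.1 hx hy ha hb hab)) (hg.1 (hst hx) (hst hy) ha hb hab)
      (hf.2 hx hy ha hb hab)).trans (hg.2 (hst hx) (hst hy) ha hb hab)⟩

section InfDist

variable {E : Type*} [NormedAddCommGroup E] [NormedSpace ℝ E] {K : Set E}

theorem convexOn_infDist (hK : Convex ℝ K) : ConvexOn ℝ univ fun x => infDist x K := by
  refine ⟨convex_univ, fun x _ y _ a b ha hb hab => ?_⟩
  rcases K.eq_empty_or_nonempty with rfl | hne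
  · simp
  refine le_of_forall_pos_le_add fun ε hε => ?_
  obtain ⟨p, hp, hxp⟩ := (infDist_lt_iff hne).1 (lt_add_of_pos_right (infDist x K) hε)
  obtain ⟨q, hq, hyq⟩ := (infDist_lt_iff hne).1 (lt_add_of_pos_right (infDist y K) hε)
  calc infDist (a • x + b • y) K
      ≤ dist (a • x + b • y) (a • p + b • q) := infDist_le_dist_of_mem (hK hp hq ha hb hab)
    _ ≤ a * dist x p + b * dist y q := by
        refine (dist_add_add_le _ _ _ _).trans_eq ?_
        rw [dist_smul₀, dist_smul₀, Real.norm_of_nonneg ha, Real.norm_of_nonneg hb]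
    _ ≤ a * (infDist x K + ε) + b * (infDist y K + ε) := by gcongr
    _ = a * infDist x K + b * infDist y K + ε := by linear_combination ε * hab

theorem convexOn_infDist_sq (hK : Convex ℝ K) : ConvexOn ℝ univ fun x => infDist x K ^ 2 :=
  (convexOn_infDist hK).pow (fun _ _ => infDist_nonneg) 2

end InfDist

/-- `g` on `(-∞, L]`, continued by its tangent line at `L` (with `g'` the derivative of `g`). -/
def tangentExtension (g g' : ℝ → ℝ) (L : ℝ) (s : ℝ) : ℝ :=
  g (min s L) + g' L * max (s - L) 0

section TangentExtension

variable {g g' : ℝ → ℝ} {a L : ℝ}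

theorem hasDerivAt_tangentExtension (hg : ∀ x, HasDerivAt g (g' x) x) (s : ℝ) :
    HasDerivAt (tangentExtension g g' L) (g' (min s L)) s := by
  have hleft : ∀ s ≤ L, HasDerivWithinAt (tangentExtension g g' L) (g' s) (Iic L) s :=
    fun s hs => (hg s).hasDerivWithinAt.congr_of_mem
      (fun t (ht : t ≤ L) => by simp [tangentExtension, ht]) hs
  have hright : ∀ s ≥ L, HasDerivWithinAt (tangentExtension g g' L) (g' L) (Ici L) s := by
    intro s hs
    have hline : HasDerivAt (fun t => g L + g' L * (t - L)) (g' L) s := by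
      simpa using ((hasDerivAt_id s).sub_const L).const_mul (g' L) |>.const_add (g L)
    exact hline.hasDerivWithinAt.congr_of_mem
      (fun t (ht : L ≤ t) => by simp [tangentExtension, ht]) hs
  rcases lt_trichotomy s L with h | rfl | h
  · rw [min_eq_left h.le]
    exact (hleft s h.le).hasDerivAt (Iic_mem_nhds h)
  · rw [min_self]
    have h := (hleft s le_rfl).union (hright s le_rfl)
    rwa [Iic_union_Ici, hasDerivWithinAt_univ] at h
  · rw [min_eq_right h.le]
    exact (hright s h.le).hasDerivAt (Ici_mem_nhds h)

theorem differentiable_tangentExtension (hg : ∀ x, HasDerivAt g (g' x) x) :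
    Differentiable ℝ (tangentExtension g g' L) :=
  fun s => (hasDerivAt_tangentExtension hg s).differentiableAt

theorem convexOn_tangentExtension (hg : ∀ x, HasDerivAt g (g' x) x)
    (hg' : MonotoneOn g' (Ici a)) (haL : a ≤ L) : ConvexOn ℝ (Ici a) (tangentExtension g g' L) := by
  refine MonotoneOn.convexOn_of_deriv (convex_Ici a)
    (differentiable_tangentExtension hg).continuous.continuousOn
    (differentiable_tangentExtension hg).differentiableOn ?_
  rw [interior_Ici]
  intro s (hs : a < s) t (ht : a < t) hst
  rw [(hasDerivAt_tangentExtension hg s).deriv, (hasDerivAt_tangentExtension hg t).deriv]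
  exact hg' (le_min hs.le haL) (le_min ht.le haL) (min_le_min_right L hst)

theorem monotoneOn_tangentExtension (hg : ∀ x, HasDerivAt g (g' x) x)
    (hg' : ∀ x ∈ Ici a, 0 ≤ g' x) (haL : a ≤ L) : MonotoneOn (tangentExtension g g' L) (Ici a) := by
  refine monotoneOn_of_deriv_nonneg (convex_Ici a)
    (differentiable_tangentExtension hg).continuous.continuousOn
    (differentiable_tangentExtension hg).differentiableOn ?_
  rw [interior_Ici]
  intro s (hs : a < s)
  rw [(hasDerivAt_tangentExtension hg s).deriv]
  exact hg' _ (le_min hs.le haL)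

end TangentExtension

section NortonHoff

variable {α : ℝ}

theorem hasDerivAt_nortonHoff (hα : α ∈ Ioc (0 : ℝ) 1) (x : ℝ) :
    HasDerivAt (fun x => α / (α + 1) * (1 + x) ^ ((α + 1) / (2 * α)))
      (1 / 2 * (1 + x) ^ (1 / (2 * α) - 1 / 2)) x := by
  obtain ⟨hα0, hα1⟩ := hα
  have hp : 1 ≤ (α + 1) / (2 * α) := by rw [le_div_iff₀ (by positivity)]; linarith
  refine ((((hasDerivAt_id x).const_add 1).rpow_const (Or.inr hp)).const_mul
    (α / (α + 1))).congr_deriv ?_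
  rw [show (α + 1) / (2 * α) - 1 = 1 / (2 * α) - 1 / 2 by field_simp; ring]
  field_simp
  simp

theorem monotoneOn_nortonHoff_deriv (hα : α ∈ Ioc (0 : ℝ) 1) :
    MonotoneOn (fun x : ℝ => 1 / 2 * (1 + x) ^ (1 / (2 * α) - 1 / 2)) (Ici 0) := by
  obtain ⟨hα0, hα1⟩ := hα
  have hexp : 0 ≤ 1 / (2 * α) - 1 / 2 := by
    rw [sub_nonneg, div_le_div_iff₀ two_pos (by positivity)]
    linarith
  intro x (hx : 0 ≤ x) y _ hxy
  dsimp only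
  gcongr

end NortonHoff

theorem stmt9_general {N : ℕ} (α lam : ℝ) (hα : α ∈ Set.Ioc (0 : ℝ) 1)
    (K : Set (EuclideanSpace ℝ (Fin N))) (hKconv : Convex ℝ K)
    (γ : EuclideanSpace ℝ (Fin N) → ℝ)
    (hγ : ∀ ξ, γ ξ =
      α / (α + 1) * (1 + min (Metric.infDist ξ K ^ 2) (lam ^ 2)) ^ ((α + 1) / (2 * α)) +
        1 / 2 * (1 + lam ^ 2) ^ (1 / (2 * α) - 1 / 2) *
          max (Metric.infDist ξ K ^ 2 - lam ^ 2) 0) :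
    ConvexOn ℝ Set.univ γ := by
  have hγΦ : γ = tangentExtension (fun x => α / (α + 1) * (1 + x) ^ ((α + 1) / (2 * α)))
      (fun x => 1 / 2 * (1 + x) ^ (1 / (2 * α) - 1 / 2)) (lam ^ 2) ∘
        fun ξ => infDist ξ K ^ 2 := funext hγ
  rw [hγΦ]
  exact ConvexOn.comp_of_mapsTo
    (convexOn_tangentExtension (hasDerivAt_nortonHoff hα) (monotoneOn_nortonHoff_deriv hα)
      (sq_nonneg lam))
    (convexOn_infDist_sq hKconv)
    (monotoneOn_tangentExtension (hasDerivAt_nortonHoff hα)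
      (fun x (hx : 0 ≤ x) => mul_nonneg one_half_pos.le (Real.rpow_nonneg (by linarith) _))
      (sq_nonneg lam))
    (fun ξ _ => sq_nonneg (infDist ξ K))

/-- The regularized Norton–Hoff potential `γ_{α,λ}` is convex. -/
theorem stmt9 {N : ℕ} (α lam : ℝ) (hα : α ∈ Set.Ioc (0 : ℝ) 1) (hlam : 0 < lam)
    (K : Set (EuclideanSpace ℝ (Fin N))) (hKc : IsClosed K) (hKconv : Convex ℝ K)
    (h0 : (0 : EuclideanSpace ℝ (Fin N)) ∈ K)
    (γ : EuclideanSpace ℝ (Fin N) → ℝ)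
    (hγ : ∀ ξ, γ ξ =
      α / (α + 1) * (1 + min (Metric.infDist ξ K ^ 2) (lam ^ 2)) ^ ((α + 1) / (2 * α)) +
        1 / 2 * (1 + lam ^ 2) ^ (1 / (2 * α) - 1 / 2) *
          max (Metric.infDist ξ K ^ 2 - lam ^ 2) 0) :
    ConvexOn ℝ Set.univ γ :=
  stmt9_general α lam hα K hKconv γ hγ
end

section
/- With γ_{α,λ} as above and B(0, r) ⊆ K, for every ξ ∈ ℝ^N one has Dγ_{α,λ}(ξ) · ξ ≥ (1 + d_K²(ξ)∧λ²)^{1/(2α)-1/2} d_K²(ξ) and Dγ_{α,λ}(ξ) · ξ ≥ r (1 + d_K²(ξ)∧λ²)^{1/(2α)-1/2} d_K(ξ) = r |Dγ_{α,λ}(ξ)|. -/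
open scoped RealInnerProductSpace

/-!
Write `v = ξ - P ξ`, so that `‖v‖ = d_K(ξ)` and `Dγ_{α,λ}(ξ)` is the positive multiple `c • v`.
Testing the variational inequality `⟪v, w - P ξ⟫ ≤ 0` of the projection onto the convex set `K`
at the point `w = (r / ‖v‖) • v` of the ball `B(0, r) ⊆ K` gives `r ‖v‖ ≤ ⟪v, P ξ⟫`, hence
`⟪v, ξ⟫ = ‖v‖² + ⟪v, P ξ⟫ ≥ ‖v‖² + r ‖v‖`; both inequalities follow after multiplying by `c`.
-/

theorem Metric.infDist_eq_norm_sub_of_forall_norm_sub_le {E : Type*} [SeminormedAddCommGroup E]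
    {K : Set E} {x p : E} (hp : p ∈ K) (hnear : ∀ y ∈ K, ‖x - p‖ ≤ ‖x - y‖) :
    Metric.infDist x K = ‖x - p‖ := by
  refine le_antisymm ((Metric.infDist_le_dist_of_mem hp).trans_eq (dist_eq_norm x p)) ?_
  exact (Metric.le_infDist ⟨p, hp⟩).2 fun y hy => (hnear y hy).trans_eq (dist_eq_norm x y).symm

section NearestPoint

variable {F : Type*} [NormedAddCommGroup F] [InnerProductSpace ℝ F] {K : Set F} {x p : F}

theorem real_inner_sub_le_zero_of_forall_norm_sub_le (hK : Convex ℝ K) (hp : p ∈ K)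
    (hnear : ∀ y ∈ K, ‖x - p‖ ≤ ‖x - y‖) : ∀ w ∈ K, ⟪x - p, w - p⟫ ≤ 0 := by
  refine (norm_eq_iInf_iff_real_inner_le_zero hK hp).1 ?_
  have : Nonempty K := ⟨⟨p, hp⟩⟩
  have hbdd : BddBelow (Set.range fun w : K => ‖x - w‖) :=
    ⟨0, by rintro _ ⟨w, rfl⟩; exact norm_nonneg _⟩
  exact le_antisymm (le_ciInf fun w => hnear w w.2) (ciInf_le hbdd ⟨p, hp⟩)

theorem mul_norm_le_real_inner_of_closedBall_subset {r : ℝ} {v : F} (hr : 0 ≤ r)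
    (hball : Metric.closedBall 0 r ⊆ K) (hv : ∀ w ∈ K, ⟪v, w - p⟫ ≤ 0) :
    r * ‖v‖ ≤ ⟪v, p⟫ := by
  -- `r / 0 = 0` makes the test point `0` when `v = 0`, so no case split is needed
  set w : F := (r / ‖v‖) • v
  have hw : w ∈ K := by
    refine hball (mem_closedBall_zero_iff.2 ?_)
    rw [norm_smul, Real.norm_of_nonneg (div_nonneg hr (norm_nonneg v)), div_mul_eq_mul_div,
      mul_div_assoc]
    exact mul_le_of_le_one_right hr (div_self_le_one _)
  have hvw : ⟪v, w⟫ = r * ‖v‖ := by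
    rw [real_inner_smul_right, real_inner_self_eq_norm_sq, sq, div_mul_eq_mul_div, mul_div_assoc,
      mul_self_div_self]
  have := hv w hw
  rw [inner_sub_right, hvw] at this
  linarith

theorem sq_norm_add_mul_norm_le_real_inner_of_closedBall_subset {r : ℝ} (hK : Convex ℝ K)
    (hr : 0 ≤ r) (hball : Metric.closedBall 0 r ⊆ K) (hp : p ∈ K)
    (hnear : ∀ y ∈ K, ‖x - p‖ ≤ ‖x - y‖) :
    ‖x - p‖ ^ 2 + r * ‖x - p‖ ≤ ⟪x - p, x⟫ := by
  have hrp := mul_norm_le_real_inner_of_closedBall_subset hr hball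
    (real_inner_sub_le_zero_of_forall_norm_sub_le hK hp hnear)
  have hsplit : ⟪x - p, x⟫ = ‖x - p‖ ^ 2 + ⟪x - p, p⟫ := by
    rw [← real_inner_self_eq_norm_sq, ← inner_add_right, sub_add_cancel]
  linarith

end NearestPoint

theorem stmt11_general {N : ℕ} (α lam r : ℝ)
    (hr : 0 < r)
    (K : Set (EuclideanSpace ℝ (Fin N))) (hKconv : Convex ℝ K)
    (hball : Metric.closedBall 0 r ⊆ K)
    (P : EuclideanSpace ℝ (Fin N) → EuclideanSpace ℝ (Fin N))
    (hPmem : ∀ x, P x ∈ K)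
    (hPnear : ∀ x, ∀ y ∈ K, ‖x - P x‖ ≤ ‖x - y‖)
    (ξ : EuclideanSpace ℝ (Fin N)) :
    ((1 + min (Metric.infDist ξ K ^ 2) (lam ^ 2)) ^ (1 / (2 * α) - 1 / 2)) *
        Metric.infDist ξ K ^ 2 ≤
      ⟪((1 + min (Metric.infDist ξ K ^ 2) (lam ^ 2)) ^ (1 / (2 * α) - 1 / 2)) • (ξ - P ξ), ξ⟫ ∧
    r * (((1 + min (Metric.infDist ξ K ^ 2) (lam ^ 2)) ^ (1 / (2 * α) - 1 / 2)) *
        Metric.infDist ξ K) ≤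
      ⟪((1 + min (Metric.infDist ξ K ^ 2) (lam ^ 2)) ^ (1 / (2 * α) - 1 / 2)) • (ξ - P ξ), ξ⟫ ∧
    r * (((1 + min (Metric.infDist ξ K ^ 2) (lam ^ 2)) ^ (1 / (2 * α) - 1 / 2)) *
        Metric.infDist ξ K) =
      r * ‖((1 + min (Metric.infDist ξ K ^ 2) (lam ^ 2)) ^ (1 / (2 * α) - 1 / 2)) • (ξ - P ξ)‖ := by
  rw [Metric.infDist_eq_norm_sub_of_forall_norm_sub_le (hPmem ξ) (hPnear ξ)]
  set c := (1 + min (‖ξ - P ξ‖ ^ 2) (lam ^ 2)) ^ (1 / (2 * α) - 1 / 2)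
  have hc : 0 < c := by positivity
  have hkey := sq_norm_add_mul_norm_le_real_inner_of_closedBall_subset hKconv hr.le hball
    (hPmem ξ) (hPnear ξ)
  have hrd : 0 ≤ r * ‖ξ - P ξ‖ := by positivity
  rw [real_inner_smul_left, norm_smul, Real.norm_of_nonneg hc.le, mul_left_comm r c]
  refine ⟨?_, ?_, rfl⟩
  · exact mul_le_mul_of_nonneg_left (by linarith) hc.le
  · exact mul_le_mul_of_nonneg_left (by nlinarith [sq_nonneg ‖ξ - P ξ‖]) hc.le

/-- Inequalities for the gradient of the Norton–Hoff potential: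
`Dγ_{α,λ}(ξ)·ξ ≥ (1 + d²∧λ²)^{1/(2α)-1/2} d²` and
`Dγ_{α,λ}(ξ)·ξ ≥ r (1 + d²∧λ²)^{1/(2α)-1/2} d = r |Dγ_{α,λ}(ξ)|` when `B(0,r) ⊆ K`. -/
theorem stmt11 {N : ℕ} (α lam r : ℝ) (hα : α ∈ Set.Ioc (0 : ℝ) 1) (hlam : 0 < lam)
    (hr : 0 < r)
    (K : Set (EuclideanSpace ℝ (Fin N))) (hKc : IsClosed K) (hKconv : Convex ℝ K)
    (hball : Metric.closedBall 0 r ⊆ K)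
    (P : EuclideanSpace ℝ (Fin N) → EuclideanSpace ℝ (Fin N))
    (hPmem : ∀ x, P x ∈ K)
    (hPnear : ∀ x, ∀ y ∈ K, ‖x - P x‖ ≤ ‖x - y‖)
    (ξ : EuclideanSpace ℝ (Fin N)) :
    ((1 + min (Metric.infDist ξ K ^ 2) (lam ^ 2)) ^ (1 / (2 * α) - 1 / 2)) *
        Metric.infDist ξ K ^ 2 ≤
      ⟪((1 + min (Metric.infDist ξ K ^ 2) (lam ^ 2)) ^ (1 / (2 * α) - 1 / 2)) • (ξ - P ξ), ξ⟫ ∧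
    r * (((1 + min (Metric.infDist ξ K ^ 2) (lam ^ 2)) ^ (1 / (2 * α) - 1 / 2)) *
        Metric.infDist ξ K) ≤
      ⟪((1 + min (Metric.infDist ξ K ^ 2) (lam ^ 2)) ^ (1 / (2 * α) - 1 / 2)) • (ξ - P ξ), ξ⟫ ∧
    r * (((1 + min (Metric.infDist ξ K ^ 2) (lam ^ 2)) ^ (1 / (2 * α) - 1 / 2)) *
        Metric.infDist ξ K) =
      r * ‖((1 + min (Metric.infDist ξ K ^ 2) (lam ^ 2)) ^ (1 / (2 * α) - 1 / 2)) • (ξ - P ξ)‖ :=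
  stmt11_general α lam r hr K hKconv hball P hPmem hPnear ξ
end

section
/- Stationary 1D perfect plasticity, plastic regime: let L > 0 and a > tanh(L), and set α = 1/(2 cosh(L)), u(x) = 2α sinh(x), σ(x) = 2α cosh(x), p = (a − 2α sinh(L)) δ_L. Then u = σ' on (0,L), |σ| ≤ 1 on [0,L] with σ(L) = 1, u(0) = 0, u(L) = tanh(L) < a, and the boundary flow rule σ(L)(a − u(L)) = |a − u(L)| holds; in particular the Dirichlet condition u(L) = a fails. -/
/-- Stationary 1D perfect plasticity, plastic regime: for `a > tanh L` and
`α = 1/(2 cosh L)`, `u(x) = 2α sinh x`, `σ(x) = 2α cosh x` satisfy `σ' = u`, `|σ| ≤ 1` on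
`[0,L]` with `σ(L) = 1`, `u(0) = 0`, `u(L) = tanh L < a`, the boundary flow rule
`σ(L)(a - u(L)) = |a - u(L)|` holds, and the Dirichlet condition `u(L) = a` fails. -/
theorem stmt17 (L a α : ℝ) (hL : 0 < L) (ha : Real.tanh L < a)
    (hα : α = 1 / (2 * Real.cosh L))
    (u σ : ℝ → ℝ)
    (hu : ∀ x, u x = 2 * α * Real.sinh x)
    (hσ : ∀ x, σ x = 2 * α * Real.cosh x) :
    (∀ x, deriv σ x = u x) ∧ (∀ x ∈ Set.Icc (0 : ℝ) L, |σ x| ≤ 1) ∧ σ L = 1 ∧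
    u 0 = 0 ∧ u L = Real.tanh L ∧ u L < a ∧
    σ L * (a - u L) = |a - u L| ∧ u L ≠ a := by
  have hc : (0:ℝ) < Real.cosh L := Real.cosh_pos L
  have h2α : 2 * α = 1 / Real.cosh L := by rw [hα]; field_simp
  have hσL : σ L = 1 := by rw [hσ, h2α]; field_simp
  have huL : u L = Real.tanh L := by
    rw [hu, h2α, Real.tanh_eq_sinh_div_cosh]; ring
  have huLa : u L < a := by rw [huL]; exact ha
  refine ⟨?_, ?_, hσL, by simp [hu], huL, huLa, ?_, ne_of_lt huLa⟩
  · intro x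
    have : σ = fun x => 2 * α * Real.cosh x := funext hσ
    rw [this, hu]
    simp [Real.deriv_cosh]
  · intro x hx
    rw [hσ, h2α]
    have h1 : Real.cosh x ≤ Real.cosh L := by
      rw [Real.cosh_le_cosh ] <;>
        simp [abs_of_nonneg hx.1, abs_of_pos hL, hx.2]
    rw [abs_of_nonneg (by positivity)]
    rw [div_mul_eq_mul_div, one_mul, div_le_one hc]
    exact h1
  · rw [hσL, one_mul, abs_of_pos (by linarith)]
end
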